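/- arXiv:2601.01652 — 2 statements merged into one kernel-verified Lean document; each statement's English description precedes it below -/
import Mathlib

section
/- Let √D₃ > √D₁ + √D₂ with D₁,D₂,D₃ ≥ 0. Then the minimum over unit complex η₁,η₂,η₃ of Re[η₁*η₂√(D₁D₂) + η₂*η₃√(D₂D₃) + η₃*η₁√(D₃D₁)] equals √(D₁D₂) − √(D₂D₃) − √(D₃D₁). -/
open Complex

private lemma key_ineq (a b c x y p q : ℝ) (ha : 0 ≤ a) (hb : 0 ≤ b) (hc : a + b ≤ c)
    (hu : x ^ 2 + y ^ 2 = 1) (hv : p ^ 2 + q ^ 2 = 1) :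
    a * b - b * c - c * a ≤ a * b * x + b * c * p + c * a * (x * p - y * q) := by
  have hc0 : 0 ≤ c := le_trans (by positivity) hc
  set S : ℝ := a ^ 2 + b ^ 2 + 2 * a * b * x with hS
  have hSeq : S = (b + a * x) ^ 2 + (a * y) ^ 2 := by
    have : a ^ 2 * (x ^ 2 + y ^ 2) = a ^ 2 := by rw [hu]; ring
    nlinarith [this]
  have hSnn : 0 ≤ S := by rw [hSeq]; positivity
  set t : ℝ := Real.sqrt S with htdef
  have ht0 : 0 ≤ t := Real.sqrt_nonneg _
  have ht2 : t ^ 2 = S := Real.sq_sqrt hSnn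
  have htab : t ≤ a + b := by
    nlinarith [ht2, ht0, mul_nonneg ha hb, sq_nonneg (x - 1), sq_nonneg y,
      mul_nonneg (mul_nonneg ha hb) (sq_nonneg y)]
  have hE2 : (b * p + a * (x * p - y * q)) ^ 2 ≤ t ^ 2 := by
    rw [ht2, hSeq]
    nlinarith [sq_nonneg ((b + a * x) * q + a * y * p), hv,
      mul_nonneg (sq_nonneg (b + a * x)) (sq_nonneg q),
      mul_nonneg (sq_nonneg (a * y)) (sq_nonneg p)]
  have hCS : -(b * p + a * (x * p - y * q)) ≤ t := by
    nlinarith [hE2, ht0, sq_nonneg (t + (b * p + a * (x * p - y * q)))]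
  nlinarith [sq_nonneg (a + b - t),
    mul_nonneg (sub_nonneg.2 hc) (sub_nonneg.2 htab),
    mul_le_mul_of_nonneg_left hCS hc0, mul_nonneg ha hb, ht2]

/-- If `√D₃ > √D₁ + √D₂` (with `D₁,D₂,D₃ ≥ 0`), the minimum over unit phases of
`Re[η₁*η₂√(D₁D₂) + η₂*η₃√(D₂D₃) + η₃*η₁√(D₃D₁)]` equals
`√(D₁D₂) − √(D₂D₃) − √(D₃D₁)`. -/
theorem phase_minimization_outside_triangle
    (D1 D2 D3 : ℝ) (h1 : 0 ≤ D1) (h2 : 0 ≤ D2) (h3 : 0 ≤ D3)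
    (ht : Real.sqrt D1 + Real.sqrt D2 < Real.sqrt D3) :
    IsLeast {x : ℝ | ∃ η1 η2 η3 : ℂ, ‖η1‖ = 1 ∧ ‖η2‖ = 1 ∧ ‖η3‖ = 1 ∧
        x = ((starRingEnd ℂ) η1 * η2 * (Real.sqrt (D1 * D2) : ℂ) +
             (starRingEnd ℂ) η2 * η3 * (Real.sqrt (D2 * D3) : ℂ) +
             (starRingEnd ℂ) η3 * η1 * (Real.sqrt (D3 * D1) : ℂ)).re}
      (Real.sqrt (D1 * D2) - Real.sqrt (D2 * D3) - Real.sqrt (D3 * D1)) := by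
  constructor
  · refine ⟨1, 1, -1, by norm_num, by norm_num, by norm_num, ?_⟩
    simp [Complex.add_re, Complex.mul_re, Complex.ofReal_re, Complex.ofReal_im]
    ring
  · rintro x ⟨η1, η2, η3, n1, n2, n3, rfl⟩
    set u : ℂ := (starRingEnd ℂ) η1 * η2 with hu
    set v : ℂ := (starRingEnd ℂ) η2 * η3 with hv
    have hn2 : (starRingEnd ℂ) η2 * η2 = 1 := by
      have hns : Complex.normSq η2 = 1 := by
        rw [Complex.normSq_eq_norm_sq, n2]; norm_num
      rw [mul_comm, Complex.mul_conj, hns, Complex.ofReal_one]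
    have h31 : (starRingEnd ℂ) η3 * η1 = (starRingEnd ℂ) (u * v) := by
      rw [hu, hv]
      simp only [map_mul, Complex.conj_conj]
      calc (starRingEnd ℂ) η3 * η1
          = η1 * ((starRingEnd ℂ) η2 * η2) * (starRingEnd ℂ) η3 := by rw [hn2]; ring
        _ = η1 * (starRingEnd ℂ) η2 * (η2 * (starRingEnd ℂ) η3) := by ring
    have hnu : ‖u‖ = 1 := by
      rw [hu, norm_mul, RCLike.norm_conj, n1, n2, mul_one]
    have hnv : ‖v‖ = 1 := by
      rw [hv, norm_mul, RCLike.norm_conj, n2, n3, mul_one]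
    have pu : u.re ^ 2 + u.im ^ 2 = 1 := by
      have h := Complex.normSq_eq_norm_sq u
      rw [hnu, Complex.normSq_apply] at h
      linear_combination h
    have pv : v.re ^ 2 + v.im ^ 2 = 1 := by
      have h := Complex.normSq_eq_norm_sq v
      rw [hnv, Complex.normSq_apply] at h
      linear_combination h
    have hcab : Real.sqrt D1 + Real.sqrt D2 ≤ Real.sqrt D3 := le_of_lt ht
    have hkey := key_ineq (Real.sqrt D1) (Real.sqrt D2) (Real.sqrt D3)
      u.re u.im v.re v.im (Real.sqrt_nonneg _) (Real.sqrt_nonneg _) hcab pu pv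
    rw [h31, Real.sqrt_mul h1, Real.sqrt_mul h2, Real.sqrt_mul h3]
    simp only [Complex.add_re, Complex.mul_re, Complex.mul_im, Complex.conj_re,
      Complex.conj_im, Complex.ofReal_re, Complex.ofReal_im]
    nlinarith [hkey]
end

section
/- Let c_α(ε) be coefficients of a normalized state curve with c_α(ε) = p_α + ε q_α + O(ε²) for α in a set S (on-facet) and c_α(ε) = √ε·r_α + O(ε) for α ∉ S (off-facet), whose occupation vector is n* + ε κ, where κ is the unit inward facet normal and D(n) = κ·n + μ vanishes on n^(α) for α ∈ S. Then normalization ∑_α |c_α(ε)|² = 1 and the occupation constraint together imply, at first order in ε, that ∑_{α∉S} |r_α|² · D(n^(α)) = 1. -/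
open scoped BigOperators
open Asymptotics Filter

/-- Appendix A setup: a normalized curve of states `c(ε)` with occupation vector
`n* + ε κ` (`κ` the unit inward facet normal, `D(n) = κ·n + μ` vanishing on the facet
configurations `α ∈ S`), whose on-facet coefficients expand as `p_α + ε q_α + O(ε²)` and
off-facet coefficients as `√ε r_α + O(ε)`. Then normalization and the occupation
constraint imply, at first order in `ε`, `∑_{α∉S} |r_α|² D(n^(α)) = 1`. -/
theorem bec_force_first_order_constraint
    (d : ℕ) (ι : Type) [Fintype ι] [DecidableEq ι] (S : Finset ι)
    (cfg : ι → Fin d → ℝ) (κ nstar : Fin d → ℝ) (μ : ℝ)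
    (hκ : (∑ k, κ k * κ k) = 1)
    (honfacet : ∀ α ∈ S, (∑ k, κ k * cfg α k) + μ = 0)
    (hD0 : (∑ k, κ k * nstar k) + μ = 0)
    (c : ℝ → ι → ℂ) (p q r : ι → ℂ) (ε' : ℝ) (hε' : 0 < ε')
    (hnorm : ∀ ε ∈ Set.Ico (0 : ℝ) ε', (∑ α, ‖c ε α‖ ^ 2) = 1)
    (hocc : ∀ ε ∈ Set.Ico (0 : ℝ) ε', ∀ k,
      (∑ α, ‖c ε α‖ ^ 2 * cfg α k) = nstar k + ε * κ k)
    (hS : ∀ α ∈ S,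
      (fun ε : ℝ => c ε α - p α - (ε : ℂ) * q α) =O[nhdsWithin 0 (Set.Ioi 0)]
        fun ε : ℝ => ε ^ 2)
    (hSc : ∀ α ∉ S,
      (fun ε : ℝ => c ε α - (Real.sqrt ε : ℂ) * r α) =O[nhdsWithin 0 (Set.Ioi 0)]
        fun ε : ℝ => ε) :
    ∑ α ∈ Sᶜ, ‖r α‖ ^ 2 * ((∑ k, κ k * cfg α k) + μ) = 1 := by
  set D : ι → ℝ := fun α => (∑ k, κ k * cfg α k) + μ with hDdef
  -- Step 1: for 0 < ε < ε', the off-facet weighted sum equals ε.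
  have key : ∀ ε ∈ Set.Ioo (0:ℝ) ε', ∑ α ∈ Sᶜ, ‖c ε α‖ ^ 2 * D α = ε := by
    intro ε hε
    have hmem : ε ∈ Set.Ico (0:ℝ) ε' := ⟨le_of_lt hε.1, hε.2⟩
    have hn := hnorm ε hmem
    have ho := hocc ε hmem
    have h1 : ∑ α, ‖c ε α‖ ^ 2 * D α = ε := by
      have e1 : ∑ α, ‖c ε α‖ ^ 2 * D α
          = (∑ k, κ k * (∑ α, ‖c ε α‖ ^ 2 * cfg α k)) + μ * ∑ α, ‖c ε α‖ ^ 2 := by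
        simp only [hDdef, mul_add, Finset.sum_add_distrib, Finset.mul_sum]
        congr 1
        · rw [Finset.sum_comm]
          refine Finset.sum_congr rfl fun k _ => Finset.sum_congr rfl fun α _ => by ring
        · exact Finset.sum_congr rfl fun α _ => by ring
      rw [e1, hn]
      have e2 : (∑ k, κ k * (∑ α, ‖c ε α‖ ^ 2 * cfg α k))
          = (∑ k, κ k * nstar k) + ε * ∑ k, κ k * κ k := by
        simp only [ho, mul_add, Finset.sum_add_distrib, Finset.mul_sum]
        congr 1
        congr 1 with k
        ring
      rw [e2, hκ]
      linarith [hD0]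
    have hsplit : ∑ α ∈ S, ‖c ε α‖ ^ 2 * D α = 0 := by
      apply Finset.sum_eq_zero
      intro α hα
      rw [show D α = 0 from honfacet α hα, mul_zero]
    have := Finset.sum_add_sum_compl S (fun α => ‖c ε α‖ ^ 2 * D α)
    rw [hsplit, zero_add] at this
    rw [this, h1]
  -- Step 2: termwise limit ‖c ε α‖²/ε → ‖r α‖² for α ∉ S.
  have hterm : ∀ α ∉ S, Tendsto (fun ε => ‖c ε α‖ ^ 2 / ε)
      (nhdsWithin 0 (Set.Ioi 0)) (nhds (‖r α‖ ^ 2)) := by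
    intro α hα
    have h := hSc α hα
    obtain ⟨C, hC⟩ := h.bound
    have hpos : ∀ᶠ ε : ℝ in nhdsWithin 0 (Set.Ioi 0), 0 < ε :=
      eventually_mem_nhdsWithin
    have h3 : (fun ε : ℝ => c ε α / (Real.sqrt ε : ℂ) - r α)
        =O[nhdsWithin 0 (Set.Ioi 0)] fun ε => Real.sqrt ε := by
      apply Asymptotics.IsBigO.of_bound C
      filter_upwards [hC, hpos] with ε hCε hεpos
      have hs : (0:ℝ) < Real.sqrt ε := Real.sqrt_pos.mpr hεpos
      have : c ε α / (Real.sqrt ε : ℂ) - r α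
          = (c ε α - (Real.sqrt ε : ℂ) * r α) / (Real.sqrt ε : ℂ) := by
        have hne : (Real.sqrt ε : ℂ) ≠ 0 := by exact_mod_cast hs.ne'
        field_simp
      rw [this]
      rw [norm_div]
      have hns : ‖(Real.sqrt ε : ℂ)‖ = Real.sqrt ε := by
        rw [Complex.norm_real, Real.norm_eq_abs, abs_of_pos hs]
      rw [hns]
      rw [div_le_iff₀ hs]
      calc ‖c ε α - (Real.sqrt ε : ℂ) * r α‖ ≤ C * ‖ε‖ := hCε
        _ = C * ‖Real.sqrt ε‖ * Real.sqrt ε := by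
          rw [Real.norm_eq_abs, Real.norm_eq_abs, abs_of_pos hεpos, abs_of_pos hs]
          rw [mul_assoc, Real.mul_self_sqrt hεpos.le]
    have hsq0 : Tendsto (fun ε : ℝ => Real.sqrt ε) (nhdsWithin 0 (Set.Ioi 0))
        (nhds 0) := by
      have := (Real.continuous_sqrt.tendsto 0).mono_left
        (nhdsWithin_le_nhds (s := Set.Ioi (0:ℝ)))
      simpa using this
    have h4 : Tendsto (fun ε : ℝ => c ε α / (Real.sqrt ε : ℂ) - r α)
        (nhdsWithin 0 (Set.Ioi 0)) (nhds 0) := h3.trans_tendsto hsq0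
    have h5 : Tendsto (fun ε : ℝ => c ε α / (Real.sqrt ε : ℂ))
        (nhdsWithin 0 (Set.Ioi 0)) (nhds (r α)) := by
      have := h4.add_const (r α)
      simpa using this
    have h6 : Tendsto (fun ε : ℝ => ‖c ε α / (Real.sqrt ε : ℂ)‖ ^ 2)
        (nhdsWithin 0 (Set.Ioi 0)) (nhds (‖r α‖ ^ 2)) := (h5.norm.pow 2)
    apply h6.congr'
    filter_upwards [hpos] with ε hεpos
    have hs : (0:ℝ) < Real.sqrt ε := Real.sqrt_pos.mpr hεpos
    rw [norm_div]
    rw [show ‖(Real.sqrt ε : ℂ)‖ = Real.sqrt ε by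
      rw [Complex.norm_real, Real.norm_eq_abs, abs_of_pos hs]]
    rw [div_pow, Real.sq_sqrt hεpos.le]
  -- Step 3: combine.
  have hsum : Tendsto (fun ε => ∑ α ∈ Sᶜ, ‖c ε α‖ ^ 2 / ε * D α)
      (nhdsWithin 0 (Set.Ioi 0)) (nhds (∑ α ∈ Sᶜ, ‖r α‖ ^ 2 * D α)) := by
    apply tendsto_finset_sum
    intro α hα
    exact (hterm α (Finset.mem_compl.mp hα)).mul_const (D α)
  have hone : Tendsto (fun ε => ∑ α ∈ Sᶜ, ‖c ε α‖ ^ 2 / ε * D α)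
      (nhdsWithin 0 (Set.Ioi 0)) (nhds 1) := by
    apply Tendsto.congr' _ tendsto_const_nhds
    filter_upwards [Ioo_mem_nhdsGT_of_mem (by constructor <;> simp [hε'.le, hε'] :
        (0:ℝ) ∈ Set.Ico 0 ε')] with ε hε
    have := key ε hε
    have hεpos := hε.1
    rw [eq_comm]
    calc ∑ α ∈ Sᶜ, ‖c ε α‖ ^ 2 / ε * D α
        = (∑ α ∈ Sᶜ, ‖c ε α‖ ^ 2 * D α) / ε := by
          rw [Finset.sum_div]; congr 1 with α; ring
      _ = ε / ε := by rw [this]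
      _ = 1 := div_self hεpos.ne'
  exact tendsto_nhds_unique hsum hone
end
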